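/- arXiv:1703.06728 — 6 statements merged into one kernel-verified Lean document; each statement's English description precedes it below -/
import Mathlib

section
/- Let n ≥ 1 and let Q be an n×n complex matrix that is Hermitian and positive semidefinite. Then the n-th root of the determinant of Q equals the infimum of the set of traces: (Re(det Q))^{1/n} = inf { (1/n)·Re(tr(H·Q)) : H ∈ ℋ }, where the infimum is taken over all H ∈ ℋ. -/
/-!
Write `H = Bᴴ * B`. Then `tr (H * Q) = tr (B * Q * Bᴴ)` and `det (H * Q) = det (B * Q * Bᴴ)`, so the
AM–GM inequality for the eigenvalues of the positive semidefinite matrix `B * Q * Bᴴ` gives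
`(det H * det Q) ^ (1 / n) ≤ tr (H * Q) / n`. For positive definite `Q` the bound is attained at
`H = (det Q) ^ (1 / n) • Q⁻¹`. For semidefinite `Q`, the minimiser for `Q + ε • 1` shows that the
infimum is at most `det (Q + ε • 1) ^ (1 / n)`, which tends to `det Q ^ (1 / n)` as `ε → 0`.
-/

open Matrix ComplexOrder
open scoped MatrixOrder Topology
open Filter

namespace Matrix

variable {ι 𝕜 : Type*} [Fintype ι] [DecidableEq ι] [RCLike 𝕜]

lemma PosSemidef.re_det_rpow_le_re_trace [Nonempty ι] {A : Matrix ι ι 𝕜} (hA : A.PosSemidef) :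
    RCLike.re A.det ^ ((1 : ℝ) / Fintype.card ι) ≤ 1 / Fintype.card ι * RCLike.re A.trace := by
  have hcard : (0 : ℝ) < Fintype.card ι := by exact_mod_cast Fintype.card_pos
  have amgm := Real.geom_mean_le_arith_mean Finset.univ (fun _ ↦ 1) hA.1.eigenvalues
    (fun _ _ ↦ zero_le_one) (by simpa using hcard) (fun i _ ↦ hA.eigenvalues_nonneg i)
  rw [hA.1.det_eq_prod_eigenvalues, hA.1.trace_eq_sum_eigenvalues, ← RCLike.ofReal_prod,
    ← RCLike.ofReal_sum, RCLike.ofReal_re, RCLike.ofReal_re]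
  simpa [one_div, div_eq_inv_mul] using amgm

lemma PosSemidef.re_det_mul_rpow_le_re_trace_mul [Nonempty ι] {H Q : Matrix ι ι 𝕜}
    (hH : H.PosSemidef) (hQ : Q.PosSemidef) :
    RCLike.re (H * Q).det ^ ((1 : ℝ) / Fintype.card ι) ≤
      1 / Fintype.card ι * RCLike.re (H * Q).trace := by
  obtain ⟨B, rfl⟩ := CStarAlgebra.nonneg_iff_eq_star_mul_self.mp hH.nonneg
  rw [star_eq_conjTranspose, Matrix.mul_assoc, det_mul, mul_comm, ← det_mul, trace_mul_comm]
  exact (hQ.mul_mul_conjTranspose_same B).re_det_rpow_le_re_trace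

lemma PosDef.exists_det_eq_one_re_trace_mul_eq [Nonempty ι] {Q : Matrix ι ι 𝕜} (hQ : Q.PosDef) :
    ∃ H : Matrix ι ι 𝕜, H.PosDef ∧ H.det = 1 ∧
      RCLike.re (H * Q).trace = Fintype.card ι * RCLike.re Q.det ^ ((1 : ℝ) / Fintype.card ι) := by
  have hdet : 0 < RCLike.re Q.det := (RCLike.pos_iff.mp hQ.det_pos).1
  have hdet_real : (RCLike.re Q.det : 𝕜) = Q.det := RCLike.conj_eq_iff_re.mp
    (RCLike.conj_eq_iff_im.mpr (RCLike.pos_iff.mp hQ.det_pos).2)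
  set c := RCLike.re Q.det ^ ((1 : ℝ) / Fintype.card ι)
  have hc : 0 < c := Real.rpow_pos_of_pos hdet _
  have hc_pow : c ^ Fintype.card ι = RCLike.re Q.det := by
    rw [← Real.rpow_natCast, ← Real.rpow_mul hdet.le, one_div_mul_cancel (by positivity),
      Real.rpow_one]
  refine ⟨c • Q⁻¹, hQ.inv.smul hc, ?_, ?_⟩
  · rw [RCLike.real_smul_eq_coe_smul (K := 𝕜), det_smul, det_nonsing_inv, ← RCLike.ofReal_pow,
      hc_pow, hdet_real, Ring.inverse_eq_inv', mul_inv_cancel₀ hQ.det_pos.ne']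
  · rw [smul_mul_assoc, nonsing_inv_mul _ hQ.det_pos.ne'.isUnit, trace_smul, trace_one,
      RCLike.smul_re, RCLike.natCast_re, mul_comm]

lemma continuous_re_det_add_smul_one_rpow (Q : Matrix ι ι 𝕜) {p : ℝ} (hp : 0 ≤ p) :
    Continuous fun ε : ℝ ↦ RCLike.re (Q + ε • 1).det ^ p :=
  (RCLike.continuous_re.comp
    (continuous_const.add (continuous_id.smul continuous_const)).matrix_det).rpow_const
      fun _ ↦ Or.inr hp

lemma PosSemidef.exists_det_eq_one_re_trace_mul_le [Nonempty ι] {Q : Matrix ι ι 𝕜}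
    (hQ : Q.PosSemidef) {ε : ℝ} (hε : 0 < ε) :
    ∃ H : Matrix ι ι 𝕜, H.PosDef ∧ H.det = 1 ∧
      1 / Fintype.card ι * RCLike.re (H * Q).trace ≤
        RCLike.re (Q + ε • 1).det ^ ((1 : ℝ) / Fintype.card ι) := by
  obtain ⟨H, hH, hdet, htr⟩ :=
    (PosDef.posSemidef_add hQ (PosDef.one.smul hε)).exists_det_eq_one_re_trace_mul_eq
  refine ⟨H, hH, hdet, ?_⟩
  have hcard : (0 : ℝ) < Fintype.card ι := by exact_mod_cast Fintype.card_pos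
  have hH_trace : 0 ≤ ε * RCLike.re H.trace :=
    mul_nonneg hε.le (RCLike.nonneg_iff.mp hH.posSemidef.trace_nonneg).1
  rw [mul_add, trace_add, map_add, mul_smul_comm, mul_one, trace_smul, RCLike.smul_re] at htr
  rw [div_mul_eq_mul_div, one_mul, div_le_iff₀ hcard]
  linarith

end Matrix

/-- Lemma 3.1: for a Hermitian positive semidefinite matrix `Q`,
`(det Q)^{1/n}` is the infimum of the normalized traces `(1/n)·Re(tr(H·Q))`
over all Hermitian positive definite matrices `H` with `det H = 1`. -/
theorem det_rpow_eq_sInf_normalized_traces (n : ℕ) (hn : 1 ≤ n)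
    (Q : Matrix (Fin n) (Fin n) ℂ) (hQ : Q.PosSemidef) :
    Q.det.re ^ ((1 : ℝ) / n) =
      sInf {x : ℝ | ∃ H : Matrix (Fin n) (Fin n) ℂ,
        H.PosDef ∧ H.det = 1 ∧ x = (1 / (n : ℝ)) * ((H * Q).trace).re} := by
  have : Nonempty (Fin n) := ⟨⟨0, hn⟩⟩
  set S := {x : ℝ | ∃ H : Matrix (Fin n) (Fin n) ℂ,
    H.PosDef ∧ H.det = 1 ∧ x = (1 / (n : ℝ)) * ((H * Q).trace).re}
  have lower : Q.det.re ^ ((1 : ℝ) / n) ∈ lowerBounds S := by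
    rintro _ ⟨H, hH, hdet, rfl⟩
    simpa [det_mul, hdet] using hH.posSemidef.re_det_mul_rpow_le_re_trace_mul hQ
  refine le_antisymm (le_csInf ⟨_, 1, PosDef.one, det_one, rfl⟩ lower) ?_
  have hcont := (continuous_re_det_add_smul_one_rpow Q (p := (1 : ℝ) / n) (by positivity)).tendsto 0
  refine ge_of_tendsto (x := 𝓝[>] (0 : ℝ)) (by simpa using hcont.mono_left nhdsWithin_le_nhds) ?_
  filter_upwards [self_mem_nhdsWithin] with ε hε
  obtain ⟨H, hH, hdet, hle⟩ := hQ.exists_det_eq_one_re_trace_mul_le hε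
  exact csInf_le_of_le ⟨_, lower⟩ ⟨H, hH, hdet, rfl⟩ (by simpa using hle)
end

section
/- Let n ≥ 1, let H be an n×n complex Hermitian positive definite matrix and let Q be an n×n complex Hermitian positive semidefinite matrix. Then (1/n)·Re(tr(H·Q)) ≥ (Re(det H))^{1/n} · (Re(det Q))^{1/n}. -/
open Matrix ComplexOrder
open scoped MatrixOrder

/-!
Conjugating by `√H` turns `H * Q` into the positive semidefinite matrix `√H * Q * √H`, which has
the same trace and determinant `det H * det Q`. For a positive semidefinite matrix, trace and
determinant are the sum and product of its nonnegative eigenvalues, so the inequality is AM-GM.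
-/

namespace Matrix

variable {m 𝕜 : Type*} [Fintype m] [DecidableEq m] [RCLike 𝕜]

theorem PosSemidef.re_det_rpow_le_re_trace_div_card [Nonempty m] {A : Matrix m m 𝕜}
    (hA : A.PosSemidef) :
    RCLike.re A.det ^ ((1 : ℝ) / Fintype.card m) ≤ RCLike.re A.trace / Fintype.card m := by
  have hcard : (Fintype.card m : ℝ) ≠ 0 := Nat.cast_ne_zero.mpr Fintype.card_ne_zero
  have hev := hA.eigenvalues_nonneg
  rw [hA.isHermitian.det_eq_prod_eigenvalues, hA.isHermitian.trace_eq_sum_eigenvalues,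
    ← RCLike.ofReal_prod, RCLike.ofReal_re, ← RCLike.ofReal_sum, RCLike.ofReal_re,
    ← Real.finsetProd_rpow _ _ fun i _ ↦ hev i, Finset.sum_div]
  calc ∏ i, hA.1.eigenvalues i ^ ((1 : ℝ) / Fintype.card m)
      ≤ ∑ i, 1 / (Fintype.card m : ℝ) * hA.1.eigenvalues i :=
        Real.geom_mean_le_arith_mean_weighted _ _ _ (fun _ _ ↦ by positivity) (by simp [hcard])
          fun i _ ↦ hev i
    _ = ∑ i, hA.1.eigenvalues i / Fintype.card m := by simp only [one_div_mul_eq_div]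

theorem PosSemidef.sqrt_mul_mul_sqrt {Q : Matrix m m 𝕜} (hQ : Q.PosSemidef)
    (H : Matrix m m 𝕜) : (CFC.sqrt H * Q * CFC.sqrt H).PosSemidef := by
  have hS : (CFC.sqrt H).IsHermitian :=
    (nonneg_iff_posSemidef.mp (CFC.sqrt_nonneg H)).isHermitian
  simpa [hS.eq] using hQ.mul_mul_conjTranspose_same (CFC.sqrt H)

variable {H : Matrix m m 𝕜}

theorem PosSemidef.trace_sqrt_mul_mul_sqrt (hH : H.PosSemidef) (Q : Matrix m m 𝕜) :
    (CFC.sqrt H * Q * CFC.sqrt H).trace = (H * Q).trace := by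
  rw [trace_mul_cycle, CFC.sqrt_mul_sqrt_self H hH.nonneg]

theorem PosSemidef.det_sqrt_mul_mul_sqrt (hH : H.PosSemidef) (Q : Matrix m m 𝕜) :
    (CFC.sqrt H * Q * CFC.sqrt H).det = H.det * Q.det := by
  rw [det_mul, det_mul, mul_right_comm, ← det_mul, CFC.sqrt_mul_sqrt_self H hH.nonneg]

end Matrix

/-- The lower-bound half of Lemma 3.1: for `H` Hermitian positive definite and
`Q` Hermitian positive semidefinite,
`(1/n)·Re(tr(H·Q)) ≥ (Re det H)^{1/n} · (Re det Q)^{1/n}`. -/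
theorem normalized_trace_ge_det_rpow_mul_det_rpow (n : ℕ) (hn : 1 ≤ n)
    (H Q : Matrix (Fin n) (Fin n) ℂ) (hH : H.PosDef) (hQ : Q.PosSemidef) :
    (1 / (n : ℝ)) * ((H * Q).trace).re ≥
      H.det.re ^ ((1 : ℝ) / n) * Q.det.re ^ ((1 : ℝ) / n) := by
  have : Nonempty (Fin n) := Fin.pos_iff_nonempty.mp hn
  have amgm := (hQ.sqrt_mul_mul_sqrt H).re_det_rpow_le_re_trace_div_card
  rw [hH.posSemidef.det_sqrt_mul_mul_sqrt, hH.posSemidef.trace_sqrt_mul_mul_sqrt,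
    Fintype.card_fin] at amgm
  obtain ⟨hH_re, hH_im⟩ := Complex.nonneg_iff.mp hH.posSemidef.det_nonneg
  obtain ⟨hQ_re, hQ_im⟩ := Complex.nonneg_iff.mp hQ.det_nonneg
  rw [ge_iff_le, ← Real.mul_rpow hH_re hQ_re, one_div_mul_eq_div]
  simpa [Complex.mul_re, ← hH_im, ← hQ_im] using amgm
end

section
/- Let n ≥ 1 and let Q be an n×n complex Hermitian positive semidefinite matrix with det Q = 0. Then for every real ε > 0 there exists H ∈ ℋ such that (1/n)·Re(tr(H·Q)) < ε. -/
/-!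
Diagonalize `Q = U diag(μ) U*`; since `det Q = ∏ μ i = 0`, some eigenvalue `μ i₀` vanishes.
Take `H = U diag(t) U*` with `t i = δ` for `i ≠ i₀` and `t i₀ = δ^(1-n)`. Then `det H = ∏ t = 1`,
and since the large weight meets the zero eigenvalue, `tr (H Q) = ∑ t i μ i = δ ∑ μ i → 0`.
-/

open Matrix ComplexOrder Unitary

theorem exists_pos_prod_eq_one_sum_mul_lt {ι : Type*} [Fintype ι] [DecidableEq ι] {μ : ι → ℝ}
    (hμ : ∀ i, 0 ≤ μ i) {i₀ : ι} (hi₀ : μ i₀ = 0) {ε : ℝ} (hε : 0 < ε) :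
    ∃ t : ι → ℝ, (∀ i, 0 < t i) ∧ ∏ i, t i = 1 ∧ ∑ i, t i * μ i < ε := by
  set S := ∑ i, μ i
  have hS : 0 ≤ S := Finset.sum_nonneg fun i _ ↦ hμ i
  set δ := ε / (S + 1)
  have hδ : 0 < δ := by positivity
  set t := Function.update (fun _ ↦ δ) i₀ (δ ^ (Fintype.card ι - 1))⁻¹
  have ht_mul : ∀ i, t i * μ i = δ * μ i := by
    intro i
    rcases eq_or_ne i i₀ with rfl | hi
    · simp [hi₀]
    · simp [t, hi]
  refine ⟨t, fun i ↦ ?_, ?_, ?_⟩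
  · rcases eq_or_ne i i₀ with rfl | hi
    · simp only [t, Function.update_self, inv_pos]
      positivity
    · simpa [t, hi] using hδ
  · rw [Finset.prod_update_of_mem (Finset.mem_univ _), Finset.prod_const,
      Finset.card_sdiff_of_subset (by simp), Finset.card_singleton, Finset.card_univ]
    exact inv_mul_cancel₀ (pow_ne_zero _ hδ.ne')
  · calc ∑ i, t i * μ i = δ * S := by rw [Finset.sum_congr rfl fun i _ ↦ ht_mul i, Finset.mul_sum]
      _ < ε := by
        rw [div_mul_eq_mul_div, div_lt_iff₀ (by positivity)]
        nlinarith

namespace Matrix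

section conjStarAlgAut

variable {ι R : Type*} [Fintype ι] [DecidableEq ι] [CommRing R] [StarRing R]
  (U : unitary (Matrix ι ι R)) (A : Matrix ι ι R)

theorem trace_conjStarAlgAut : (conjStarAlgAut R _ U A).trace = A.trace := by
  rw [conjStarAlgAut_apply, trace_mul_cycle, coe_star_mul_self, one_mul]

theorem det_conjStarAlgAut : (conjStarAlgAut R _ U A).det = A.det := by
  rw [conjStarAlgAut_apply, det_mul_comm, ← mul_assoc, coe_star_mul_self, one_mul]

theorem posDef_conjStarAlgAut_iff [PartialOrder R] :
    (conjStarAlgAut R _ U A).PosDef ↔ A.PosDef :=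
  isUnit_coe.posDef_star_right_conjugate_iff

end conjStarAlgAut

namespace IsHermitian

variable {ι 𝕜 : Type*} [Fintype ι] [DecidableEq ι] [RCLike 𝕜] {A : Matrix ι ι 𝕜}

theorem exists_eigenvalues_eq_zero (hA : A.IsHermitian) (h : A.det = 0) :
    ∃ i, hA.eigenvalues i = 0 := by
  simpa [hA.det_eq_prod_eigenvalues, Finset.prod_eq_zero_iff] using h

theorem re_trace_conjStarAlgAut_diagonal_mul (hA : A.IsHermitian) (t : ι → ℝ) :
    RCLike.re (conjStarAlgAut 𝕜 _ hA.eigenvectorUnitary (diagonal (RCLike.ofReal ∘ t)) * A).trace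
      = ∑ i, t i * hA.eigenvalues i := by
  rw [congrArg (_ * ·) hA.spectral_theorem, ← map_mul, trace_conjStarAlgAut,
    diagonal_mul_diagonal, trace_diagonal]
  simp

end IsHermitian

end Matrix

theorem exists_normalized_trace_lt_of_det_eq_zero_general (n : ℕ)
    (Q : Matrix (Fin n) (Fin n) ℂ) (hQ : Q.PosSemidef) (hdet : Q.det = 0) :
    ∀ ε : ℝ, 0 < ε → ∃ H : Matrix (Fin n) (Fin n) ℂ,
      H.PosDef ∧ H.det = 1 ∧ (1 / (n : ℝ)) * ((H * Q).trace).re < ε := by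
  intro ε hε
  obtain ⟨i₀, hi₀⟩ := hQ.1.exists_eigenvalues_eq_zero hdet
  have hn : (0 : ℝ) < n := Nat.cast_pos.mpr i₀.pos
  obtain ⟨t, ht_pos, ht_prod, ht_sum⟩ :=
    exists_pos_prod_eq_one_sum_mul_lt hQ.eigenvalues_nonneg hi₀ (mul_pos hn hε)
  refine ⟨conjStarAlgAut ℂ _ hQ.1.eigenvectorUnitary (diagonal (RCLike.ofReal ∘ t)), ?_, ?_, ?_⟩
  · rw [posDef_conjStarAlgAut_iff, posDef_diagonal_iff]
    simpa using ht_pos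
  · rw [det_conjStarAlgAut, det_diagonal]
    simpa [← Complex.ofReal_prod] using ht_prod
  · rw [← RCLike.re_to_complex, hQ.1.re_trace_conjStarAlgAut_diagonal_mul, one_div_mul_eq_div,
      div_lt_iff₀ hn]
    linarith

/-- The degenerate case of Lemma 3.1: if `Q` is Hermitian positive semidefinite
with `det Q = 0`, then the normalized traces `(1/n)·Re(tr(H·Q))`, over Hermitian
positive definite `H` with `det H = 1`, get arbitrarily close to `0`. -/
theorem exists_normalized_trace_lt_of_det_eq_zero (n : ℕ) (hn : 1 ≤ n)
    (Q : Matrix (Fin n) (Fin n) ℂ) (hQ : Q.PosSemidef) (hdet : Q.det = 0) :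
    ∀ ε : ℝ, 0 < ε → ∃ H : Matrix (Fin n) (Fin n) ℂ,
      H.PosDef ∧ H.det = 1 ∧ (1 / (n : ℝ)) * ((H * Q).trace).re < ε :=
  exists_normalized_trace_lt_of_det_eq_zero_general n Q hQ hdet
end

section
/- Let n ≥ 1, let Q be an n×n complex Hermitian positive semidefinite matrix and let c ≥ 0 be a real number. Then Re(det Q) ≥ cⁿ if and only if for every H ∈ ℋ one has (1/n)·Re(tr(H·Q)) ≥ c. -/
/-!
If `H = Bᴴ B` is positive semidefinite, then `H Q` has the same trace and determinant as the
positive semidefinite matrix `B Q Bᴴ`, so AM–GM on the eigenvalues of `B Q Bᴴ` gives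
`(det H · det Q)^(1/n) ≤ (1/n) tr (H Q)`. For invertible `Q` this is sharp at
`H = (det Q)^(1/n) Q⁻¹`; a singular `Q` is reached as the limit of `Q + ε I`.
-/

open Matrix ComplexOrder

theorem Real.prod_le_sum_div_card_pow {ι : Type*} [Fintype ι] {z : ι → ℝ}
    (hz : ∀ i, 0 ≤ z i) :
    ∏ i, z i ≤ ((∑ i, z i) / Fintype.card ι) ^ Fintype.card ι := by
  set N := Fintype.card ι
  rcases Nat.eq_zero_or_pos N with hN | hN
  · have : IsEmpty ι := Fintype.card_eq_zero_iff.mp hN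
    simp [hN]
  have amgm := Real.geom_mean_le_arith_mean_weighted Finset.univ (fun _ ↦ (N : ℝ)⁻¹) z
    (fun _ _ ↦ by positivity) (by simp [N, hN.ne']) (fun i _ ↦ hz i)
  calc ∏ i, z i = (∏ i, z i ^ (N : ℝ)⁻¹) ^ N := by
        rw [← Finset.prod_pow]
        exact Finset.prod_congr rfl fun i _ ↦ (Real.rpow_inv_natCast_pow (hz i) hN.ne').symm
    _ ≤ (∑ i, (N : ℝ)⁻¹ * z i) ^ N :=
        pow_le_pow_left₀ (Finset.prod_nonneg fun i _ ↦ Real.rpow_nonneg (hz i) _) amgm N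
    _ = _ := by rw [← Finset.mul_sum, inv_mul_eq_div]

namespace Matrix

variable {𝕜 ι : Type*} [RCLike 𝕜] [Fintype ι] [DecidableEq ι]

theorem PosSemidef.re_det_le_re_trace_div_card_pow {A : Matrix ι ι 𝕜} (hA : A.PosSemidef) :
    RCLike.re A.det ≤ (RCLike.re A.trace / Fintype.card ι) ^ Fintype.card ι := by
  have hdet : RCLike.re A.det = ∏ i, hA.1.eigenvalues i := by
    rw [hA.1.det_eq_prod_eigenvalues, ← RCLike.ofReal_prod, RCLike.ofReal_re]
  have htr : RCLike.re A.trace = ∑ i, hA.1.eigenvalues i := by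
    rw [hA.1.trace_eq_sum_eigenvalues, ← RCLike.ofReal_sum, RCLike.ofReal_re]
  rw [hdet, htr]
  exact Real.prod_le_sum_div_card_pow hA.eigenvalues_nonneg

open scoped MatrixOrder in
theorem PosSemidef.exists_posSemidef_trace_eq_det_eq_mul {H Q : Matrix ι ι 𝕜}
    (hH : H.PosSemidef) (hQ : Q.PosSemidef) :
    ∃ M : Matrix ι ι 𝕜, M.PosSemidef ∧ M.trace = (H * Q).trace ∧ M.det = (H * Q).det := by
  obtain ⟨B, rfl⟩ := CStarAlgebra.nonneg_iff_eq_star_mul_self.mp hH.nonneg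
  refine ⟨B * Q * Bᴴ, hQ.mul_mul_conjTranspose_same B, ?_, ?_⟩
  · rw [trace_mul_cycle, star_eq_conjTranspose, Matrix.mul_assoc]
  · simp only [det_mul, star_eq_conjTranspose]
    ring

theorem PosDef.exists_det_eq_one_trace_mul_eq {Q : Matrix ι ι 𝕜} (hQ : Q.PosDef) {α : ℝ}
    (hα : 0 < α) (hαQ : α ^ Fintype.card ι = RCLike.re Q.det) :
    ∃ H : Matrix ι ι 𝕜, H.PosDef ∧ H.det = 1 ∧ (H * Q).trace = α * Fintype.card ι := by
  have hdet : Q.det = (α ^ Fintype.card ι : ℝ) := by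
    rw [hαQ]
    exact RCLike.ext (by simp) (by simpa using (RCLike.pos_iff.mp hQ.det_pos).2)
  have hunit : IsUnit Q.det := by rw [hdet]; exact isUnit_iff_ne_zero.mpr (by positivity)
  refine ⟨(α : 𝕜) • Q⁻¹, hQ.inv.smul (RCLike.ofReal_pos.mpr hα), ?_, ?_⟩
  · rw [det_smul, det_nonsing_inv, Ring.inverse_eq_inv', hdet]
    push_cast
    exact mul_inv_cancel₀ (by positivity)
  · rw [smul_mul_assoc, nonsing_inv_mul Q hunit, trace_smul, trace_one, smul_eq_mul]

theorem le_re_det_of_forall_le_re_det_add_smul_one {Q : Matrix ι ι 𝕜} {a : ℝ}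
    (h : ∀ ε : ℝ, 0 < ε → a ≤ RCLike.re (Q + (ε : 𝕜) • 1).det) : a ≤ RCLike.re Q.det := by
  have hcont : Continuous fun ε : ℝ ↦ RCLike.re (Q + (ε : 𝕜) • (1 : Matrix ι ι 𝕜)).det := by
    fun_prop
  have hlim := hcont.tendsto 0
  simp only [RCLike.ofReal_zero, zero_smul, add_zero] at hlim
  exact ge_of_tendsto (hlim.mono_left (nhdsWithin_le_nhds (s := Set.Ioi 0)))
    (eventually_nhdsWithin_of_forall fun ε hε ↦ h ε hε)

theorem PosSemidef.re_trace_mul_nonneg {H Q : Matrix ι ι 𝕜} (hH : H.PosSemidef)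
    (hQ : Q.PosSemidef) : 0 ≤ RCLike.re (H * Q).trace := by
  obtain ⟨M, hM, htr, -⟩ := hH.exists_posSemidef_trace_eq_det_eq_mul hQ
  exact htr ▸ (RCLike.nonneg_iff.mp hM.trace_nonneg).1

theorem PosSemidef.re_det_mul_le_re_trace_mul_div_card_pow {H Q : Matrix ι ι 𝕜}
    (hH : H.PosSemidef) (hQ : Q.PosSemidef) :
    RCLike.re (H * Q).det ≤ (RCLike.re (H * Q).trace / Fintype.card ι) ^ Fintype.card ι := by
  obtain ⟨M, hM, htr, hdet⟩ := hH.exists_posSemidef_trace_eq_det_eq_mul hQ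
  exact htr ▸ hdet ▸ hM.re_det_le_re_trace_div_card_pow

variable [Nonempty ι]

theorem PosDef.pow_card_le_re_det_of_forall_trace_mul {Q : Matrix ι ι 𝕜} (hQ : Q.PosDef)
    {c : ℝ} (hc : 0 ≤ c)
    (h : ∀ H : Matrix ι ι 𝕜, H.PosDef → H.det = 1 →
      c ≤ RCLike.re (H * Q).trace / Fintype.card ι) :
    c ^ Fintype.card ι ≤ RCLike.re Q.det := by
  set N := Fintype.card ι
  have hN : 0 < N := Fintype.card_pos
  have hdet : 0 < RCLike.re Q.det := (RCLike.pos_iff.mp hQ.det_pos).1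
  set α := RCLike.re Q.det ^ (N : ℝ)⁻¹
  have hαN : α ^ N = RCLike.re Q.det := Real.rpow_inv_natCast_pow hdet.le hN.ne'
  obtain ⟨H, hH, hH1, htr⟩ :=
    hQ.exists_det_eq_one_trace_mul_eq (Real.rpow_pos_of_pos hdet _) hαN
  have hcα : c ≤ α := by
    have hcH := h H hH hH1
    rwa [htr, RCLike.re_ofReal_mul, RCLike.natCast_re, mul_div_cancel_right₀ _ (by positivity)]
      at hcH
  exact hαN ▸ pow_le_pow_left₀ hc hcα N

theorem PosSemidef.pow_card_le_re_det_of_forall_trace_mul {Q : Matrix ι ι 𝕜}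
    (hQ : Q.PosSemidef) {c : ℝ} (hc : 0 ≤ c)
    (h : ∀ H : Matrix ι ι 𝕜, H.PosDef → H.det = 1 →
      c ≤ RCLike.re (H * Q).trace / Fintype.card ι) :
    c ^ Fintype.card ι ≤ RCLike.re Q.det := by
  refine le_re_det_of_forall_le_re_det_add_smul_one fun ε hε ↦ ?_
  have hQε : (Q + (ε : 𝕜) • 1).PosDef :=
    PosDef.posSemidef_add hQ (PosDef.one.smul (RCLike.ofReal_pos.mpr hε))
  refine hQε.pow_card_le_re_det_of_forall_trace_mul hc fun H hH hH1 ↦ ?_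
  have htrH : 0 ≤ RCLike.re H.trace := (RCLike.nonneg_iff.mp hH.posSemidef.trace_nonneg).1
  calc c ≤ RCLike.re (H * Q).trace / Fintype.card ι := h H hH hH1
    _ ≤ (RCLike.re (H * Q).trace + ε * RCLike.re H.trace) / Fintype.card ι := by
        gcongr; exact le_add_of_nonneg_right (by positivity)
    _ = RCLike.re (H * (Q + (ε : 𝕜) • 1)).trace / Fintype.card ι := by
        simp [mul_add, trace_add, trace_smul, RCLike.smul_re]

end Matrix

/-- The pointwise matrix content of the equivalence (i) ⇔ (iii) of the Main
Theorem: for `Q` Hermitian positive semidefinite and `c ≥ 0`,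
`Re(det Q) ≥ cⁿ` iff `(1/n)·Re(tr(H·Q)) ≥ c` for every Hermitian positive
definite `H` with `det H = 1`. -/
theorem det_ge_pow_iff_forall_normalized_trace_ge (n : ℕ) (hn : 1 ≤ n)
    (Q : Matrix (Fin n) (Fin n) ℂ) (hQ : Q.PosSemidef) (c : ℝ) (hc : 0 ≤ c) :
    Q.det.re ≥ c ^ n ↔
      ∀ H : Matrix (Fin n) (Fin n) ℂ, H.PosDef → H.det = 1 →
        (1 / (n : ℝ)) * ((H * Q).trace).re ≥ c := by
  have : Nonempty (Fin n) := ⟨⟨0, hn⟩⟩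
  simp only [ge_iff_le, one_div_mul_eq_div]
  constructor
  · intro hdet H hH hH1
    have hAMGM := hH.posSemidef.re_det_mul_le_re_trace_mul_div_card_pow hQ
    rw [det_mul, hH1, one_mul, Fintype.card_fin] at hAMGM
    exact le_of_pow_le_pow_left₀ (by omega)
      (div_nonneg (hH.posSemidef.re_trace_mul_nonneg hQ) n.cast_nonneg) (hdet.trans hAMGM)
  · intro h
    simpa using hQ.pow_card_le_re_det_of_forall_trace_mul hc (by simpa using h)
end

section
/- Let n ≥ 1 and let Q₁, …, Qₙ be n×n complex Hermitian positive semidefinite matrices. For a permutation σ of {1, …, n}, let M_σ be the n×n matrix whose (j,k) entry is the (j,k) entry of Q_{σ(k)} (i.e., the k-th column of M_σ is the k-th column of Q_{σ(k)}). Then (1/n!) · Re( Σ_{σ ∈ Sₙ} det M_σ ) ≥ Π_{i=1}^{n} (Re(det Q_i))^{1/n}. -/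
/-!
Induction on `n`, with `D(Q) = ∑_σ det M_σ`. This sum is multiplicative under congruence,
`D(Sᴴ Qᵢ S) = |det S|² D(Q)`, and for `Qᵢ = Bᵢᴴ Bᵢ` it is a sum of terms `|det W|²`, hence
nonnegative. If `det Q₀ = 0` there is nothing to prove; otherwise a congruence makes `Q₀ = 1`,
and then `D(Q)` is the sum over `p` of `D` of the matrices obtained from `Q₁, …, Qₙ` by deleting
row and column `p`. The induction hypothesis bounds each summand and AM-GM bounds the sum; what
remains is that the `(p, p)` minors of a positive semidefinite `A` of size `m + 1` have product
at least `(det A)^m`. For invertible `A` the `(p, p)` minor is `det A · (A⁻¹)ₚₚ`, so this is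
Hadamard's inequality `det A⁻¹ ≤ ∏ₚ (A⁻¹)ₚₚ`.
-/

open Matrix ComplexOrder Equiv Equiv.Perm Finset
open scoped Nat

namespace Real

theorem card_mul_prod_rpow_le_sum {ι : Type*} [Fintype ι] {z : ι → ℝ} (hz : ∀ i, 0 ≤ z i) :
    Fintype.card ι * ∏ i, z i ^ (1 / Fintype.card ι : ℝ) ≤ ∑ i, z i := by
  rcases isEmpty_or_nonempty ι with hι | hι
  · simp
  have hN : (0 : ℝ) < Fintype.card ι := by exact_mod_cast Fintype.card_pos
  have hw : ∑ _i : ι, (1 / Fintype.card ι : ℝ) = 1 := by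
    rw [sum_const, card_univ, nsmul_eq_mul, mul_one_div_cancel hN.ne']
  have h := geom_mean_le_arith_mean_weighted univ (fun _ => (1 / Fintype.card ι : ℝ)) z
    (fun _ _ => by positivity) hw fun i _ => hz i
  rw [← mul_sum, one_div_mul_eq_div, le_div_iff₀' hN] at h
  exact h

theorem prod_mul_rpow_one_div_card {ι : Type*} [Fintype ι] [Nonempty ι] {c : ℝ} (hc : 0 ≤ c)
    {x : ι → ℝ} (hx : ∀ i, 0 ≤ x i) :
    ∏ i, (c * x i) ^ (1 / Fintype.card ι : ℝ) = c * ∏ i, x i ^ (1 / Fintype.card ι : ℝ) := by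
  have hN : (Fintype.card ι : ℝ) ≠ 0 := by exact_mod_cast Fintype.card_ne_zero
  simp_rw [mul_rpow hc (hx _), prod_mul_distrib, prod_const, card_univ, ← rpow_natCast,
    ← rpow_mul hc, one_div_mul_cancel hN, rpow_one]

end Real

namespace Matrix

section CommRing

variable {ι R : Type*} [Fintype ι] [DecidableEq ι] [CommRing R]

/-- Unnormalized: `mixedDiscriminant (fun _ => A) = (card ι)! * det A`. -/
def mixedDiscriminant (Q : ι → Matrix ι ι R) : R :=
  ∑ σ : Perm ι, (of fun j k => Q (σ k) j k).det

theorem mixedDiscriminant_eq_sum_sum (Q : ι → Matrix ι ι R) :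
    mixedDiscriminant Q =
      ∑ σ : Perm ι, ∑ τ : Perm ι, (sign σ * sign τ : ℤ) * ∏ i, Q i (τ i) (σ i) := by
  rw [mixedDiscriminant, ← Equiv.sum_comp (Equiv.inv _)]
  refine sum_congr rfl fun σ _ => ?_
  rw [det_apply', ← Equiv.sum_comp (Equiv.mulRight σ⁻¹)]
  refine sum_congr rfl fun τ _ => ?_
  have hprod : ∏ k, Q (σ⁻¹ k) ((τ * σ⁻¹) k) k = ∏ i, Q i (τ i) (σ i) := by
    rw [← Equiv.prod_comp σ]; simp
  simp only [Equiv.inv_apply, coe_mulRight, of_apply, hprod, Perm.sign_mul, sign_inv]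
  push_cast; ring

theorem mixedDiscriminant_transpose (Q : ι → Matrix ι ι R) :
    mixedDiscriminant (fun i => (Q i)ᵀ) = mixedDiscriminant Q := by
  rw [mixedDiscriminant_eq_sum_sum, mixedDiscriminant_eq_sum_sum, sum_comm]
  refine sum_congr rfl fun σ _ => sum_congr rfl fun τ _ => ?_
  simp only [transpose_apply, mul_comm (sign τ : ℤ)]

theorem mixedDiscriminant_mul_left (A : Matrix ι ι R) (Q : ι → Matrix ι ι R) :
    mixedDiscriminant (fun i => A * Q i) = A.det * mixedDiscriminant Q := by
  simp_rw [mixedDiscriminant, mul_sum, ← det_mul]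
  refine sum_congr rfl fun σ _ => congrArg det ?_
  ext j k; simp [mul_apply]

theorem mixedDiscriminant_mul_right (Q : ι → Matrix ι ι R) (B : Matrix ι ι R) :
    mixedDiscriminant (fun i => Q i * B) = mixedDiscriminant Q * B.det := by
  rw [← mixedDiscriminant_transpose, ← mixedDiscriminant_transpose Q]
  simp_rw [transpose_mul, mixedDiscriminant_mul_left, det_transpose, mul_comm]

theorem mixedDiscriminant_conjTranspose_mul_mul [StarRing R] (S : Matrix ι ι R)
    (Q : ι → Matrix ι ι R) :
    mixedDiscriminant (fun i => Sᴴ * Q i * S) = star S.det * S.det * mixedDiscriminant Q := by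
  rw [mixedDiscriminant_mul_right, mixedDiscriminant_mul_left, det_conjTranspose]; ring

theorem mixedDiscriminant_conjTranspose_mul_self [StarRing R] (B : ι → Matrix ι ι R) :
    mixedDiscriminant (fun i => (B i)ᴴ * B i) =
      ∑ r : ι → ι, star (of fun i k => B i (r i) k).det * (of fun i k => B i (r i) k).det := by
  have hdet : ∀ r : ι → ι, (of fun i k => B i (r i) k).det =
      ∑ σ : Perm ι, (sign σ : R) * ∏ i, B i (r i) (σ i) := fun r => by
    rw [← det_transpose, det_apply']; rfl
  simp_rw [hdet, star_sum, sum_mul_sum, mixedDiscriminant_eq_sum_sum, mul_apply,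
    conjTranspose_apply, prod_univ_sum, Fintype.piFinset_univ, mul_sum]
  conv_lhs => rw [sum_comm]; enter [2, τ]; rw [sum_comm]
  rw [sum_comm]
  refine sum_congr rfl fun r _ => sum_congr rfl fun τ _ => sum_congr rfl fun σ _ => ?_
  simp only [star_mul, star_prod, star_intCast, prod_mul_distrib]
  push_cast; ring

theorem det_submatrix_swap_comp_succ {n : ℕ} (A : Matrix (Fin (n + 1)) (Fin (n + 1)) R)
    (p : Fin (n + 1)) :
    (A.submatrix (Equiv.swap 0 p ∘ Fin.succ) (Equiv.swap 0 p ∘ Fin.succ)).det = A.adjugate p p := by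
  have h := adjugate_fin_succ_eq_det_submatrix (A.submatrix (Equiv.swap 0 p) (Equiv.swap 0 p)) 0 0
  simp only [adjugate_submatrix_equiv_self, submatrix_apply, swap_apply_left, Fin.succAbove_zero,
    submatrix_submatrix, Fin.val_zero, add_zero, pow_zero, one_mul] at h
  exact h.symm

theorem mixedDiscriminant_fin_succ_of_eq_one {n : ℕ}
    (Q : Fin (n + 1) → Matrix (Fin (n + 1)) (Fin (n + 1)) R) (hQ0 : Q 0 = 1) :
    mixedDiscriminant Q = ∑ p, mixedDiscriminant fun j =>
      (Q j.succ).submatrix (Equiv.swap 0 p ∘ Fin.succ) (Equiv.swap 0 p ∘ Fin.succ) := by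
  -- Split `σ` and `τ` as `(σ 0, σ')`, `(τ 0, τ')`; the factor `Q 0 (τ 0) (σ 0)` forces `τ 0 = σ 0`.
  rw [mixedDiscriminant_eq_sum_sum, ← Equiv.sum_comp decomposeFin.symm, Fintype.sum_prod_type]
  refine sum_congr rfl fun p _ => ?_
  rw [mixedDiscriminant_eq_sum_sum]
  refine sum_congr rfl fun σ _ => ?_
  rw [← Equiv.sum_comp decomposeFin.symm, Fintype.sum_prod_type, sum_eq_single p]
  · refine sum_congr rfl fun τ _ => ?_
    have hsign : ∀ ρ : Perm (Fin n), (sign (decomposeFin.symm (p, ρ)) : ℤ) =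
        (if p = 0 then 1 else -1) * sign ρ := fun ρ => by
      rw [decomposeFin.symm_sign]; split_ifs <;> simp
    simp only [Fin.prod_univ_succ, decomposeFin_symm_apply_zero, hQ0, one_apply_eq, one_mul,
      decomposeFin_symm_apply_succ, hsign, submatrix_apply, Function.comp_apply]
    split_ifs <;> push_cast <;> ring
  · intro q _ hq
    refine sum_eq_zero fun τ _ => ?_
    rw [Fin.prod_univ_succ, decomposeFin_symm_apply_zero, decomposeFin_symm_apply_zero, hQ0,
      one_apply_ne hq, zero_mul, mul_zero]
  · simp

end CommRing

theorem adjugate_apply_of_det_ne_zero {ι K : Type*} [Fintype ι] [DecidableEq ι] [Field K]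
    {A : Matrix ι ι K} (hA : A.det ≠ 0) (i j : ι) : A.adjugate i j = A.det * A⁻¹ i j := by
  rw [inv_def, smul_apply, smul_eq_mul, Ring.inverse_eq_inv', mul_inv_cancel_left₀ hA]

section RCLike

open scoped MatrixOrder

variable {ι 𝕜 : Type*} [Fintype ι] [DecidableEq ι] [RCLike 𝕜]

theorem PosSemidef.ofReal_re_det {A : Matrix ι ι 𝕜} (hA : A.PosSemidef) :
    ((RCLike.re A.det : ℝ) : 𝕜) = A.det := by
  obtain ⟨x, -, hx⟩ := RCLike.nonneg_iff_exists_ofReal.mp hA.det_nonneg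
  rw [← hx, RCLike.ofReal_re]

theorem PosSemidef.re_det_nonneg {A : Matrix ι ι 𝕜} (hA : A.PosSemidef) : 0 ≤ RCLike.re A.det :=
  (RCLike.nonneg_iff.mp hA.det_nonneg).1

theorem PosSemidef.re_det_le_one_of_diag_eq_one {A : Matrix ι ι 𝕜} (hA : A.PosSemidef)
    (hdiag : ∀ i, A i i = 1) : RCLike.re A.det ≤ 1 := by
  set μ := hA.isHermitian.eigenvalues
  have htrace : ∑ i, μ i = Fintype.card ι := by
    have h := hA.isHermitian.trace_eq_sum_eigenvalues
    simp only [trace, diag_apply, hdiag, sum_const, card_univ, nsmul_one] at h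
    exact_mod_cast h.symm
  rw [hA.isHermitian.det_eq_prod_eigenvalues, ← RCLike.ofReal_prod, RCLike.ofReal_re]
  calc ∏ i, μ i ≤ ∏ i, Real.exp (μ i - 1) :=
        prod_le_prod (fun i _ => hA.eigenvalues_nonneg i)
          fun i _ => by linarith [Real.add_one_le_exp (μ i - 1)]
    _ = 1 := by rw [← Real.exp_sum, sum_sub_distrib, htrace]; simp

theorem PosDef.re_det_le_prod_re_diag {A : Matrix ι ι 𝕜} (hA : A.PosDef) :
    RCLike.re A.det ≤ ∏ i, RCLike.re (A i i) := by
  set a : ι → ℝ := fun i => RCLike.re (A i i)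
  have ha : ∀ i, 0 < a i := fun i => (RCLike.pos_iff.mp hA.diag_pos).1
  have hAa : ∀ i, A i i = a i := fun i => (congrFun hA.isHermitian.coe_re_diag i).symm
  set D : Matrix ι ι 𝕜 := diagonal fun i => ((√(a i))⁻¹ : ℝ)
  have hDiag : ∀ i, (Dᴴ * A * D) i i = 1 := fun i => by
    simp only [D, diagonal_conjTranspose, diagonal_mul, mul_diagonal, Pi.star_apply,
      RCLike.star_def, RCLike.conj_ofReal, hAa, ← RCLike.ofReal_mul]
    rw [mul_comm, ← mul_assoc, ← mul_inv, Real.mul_self_sqrt (ha i).le, inv_mul_cancel₀ (ha i).ne',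
      RCLike.ofReal_one]
  have hdet : RCLike.re (Dᴴ * A * D).det = (∏ i, a i)⁻¹ * RCLike.re A.det := by
    rw [det_mul, det_mul, det_conjTranspose, det_diagonal, ← RCLike.ofReal_prod, RCLike.star_def,
      RCLike.conj_ofReal, mul_comm, ← mul_assoc, ← RCLike.ofReal_mul, RCLike.re_ofReal_mul,
      ← prod_mul_distrib, ← prod_inv_distrib]
    congr 1
    exact prod_congr rfl fun i _ => by rw [← mul_inv, Real.mul_self_sqrt (ha i).le]
  have h := (hA.posSemidef.conjTranspose_mul_mul_same D).re_det_le_one_of_diag_eq_one hDiag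
  rw [hdet, inv_mul_le_iff₀ (prod_pos fun i _ => ha i), mul_one] at h
  exact h

theorem PosSemidef.re_det_pow_le_prod_re_adjugate {m : ℕ} {A : Matrix (Fin (m + 1)) (Fin (m + 1)) 𝕜}
    (hA : A.PosSemidef) : RCLike.re A.det ^ m ≤ ∏ p, RCLike.re (A.adjugate p p) := by
  by_cases hdet : A.det = 0
  · rcases m with _ | m
    · simp
    rw [hdet, map_zero, zero_pow m.succ_ne_zero]
    exact prod_nonneg fun p _ => by
      rw [← det_submatrix_swap_comp_succ]; exact (hA.submatrix _).re_det_nonneg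
  have hPD : A.PosDef := hA.posDef_iff_det_ne_zero.mpr hdet
  set d := RCLike.re A.det
  have hd : 0 < d := (RCLike.pos_iff.mp hPD.det_pos).1
  have hadj : ∀ p, RCLike.re (A.adjugate p p) = d * RCLike.re (A⁻¹ p p) := fun p => by
    rw [adjugate_apply_of_det_ne_zero hdet, ← hA.ofReal_re_det, RCLike.re_ofReal_mul]
  have hdet_inv : RCLike.re A⁻¹.det = d⁻¹ := by
    rw [det_nonsing_inv, Ring.inverse_eq_inv', ← hA.ofReal_re_det, ← RCLike.ofReal_inv,
      RCLike.ofReal_re]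
  calc d ^ m = d ^ (m + 1) * RCLike.re A⁻¹.det := by
        rw [hdet_inv, pow_succ, mul_inv_cancel_right₀ hd.ne']
    _ ≤ d ^ (m + 1) * ∏ p, RCLike.re (A⁻¹ p p) :=
        mul_le_mul_of_nonneg_left hPD.inv.re_det_le_prod_re_diag (by positivity)
    _ = ∏ p, RCLike.re (A.adjugate p p) := by
        simp only [hadj, prod_mul_distrib, prod_const, card_univ, Fintype.card_fin]

theorem mixedDiscriminant_nonneg {Q : ι → Matrix ι ι 𝕜} (hQ : ∀ i, (Q i).PosSemidef) :
    0 ≤ mixedDiscriminant Q := by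
  choose B hB using fun i => CStarAlgebra.nonneg_iff_eq_star_mul_self.mp (hQ i).nonneg
  rw [funext hB]
  exact (mixedDiscriminant_conjTranspose_mul_self B).symm ▸
    sum_nonneg fun r _ => star_mul_self_nonneg _

theorem PosDef.exists_conjTranspose_mul_mul_eq_one {A : Matrix ι ι 𝕜} (hA : A.PosDef) :
    ∃ S : Matrix ι ι 𝕜, S.det ≠ 0 ∧ Sᴴ * A * S = 1 := by
  obtain ⟨B, hB, rfl⟩ := CStarAlgebra.isStrictlyPositive_iff_eq_star_mul_self.mp
    (isStrictlyPositive_iff_posDef.mpr hA)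
  have hBdet : IsUnit B.det := (isUnit_iff_isUnit_det B).mp hB
  refine ⟨B⁻¹, (isUnit_nonsing_inv_det B hBdet).ne_zero, ?_⟩
  rw [star_eq_conjTranspose, ← mul_assoc, ← conjTranspose_mul, mul_assoc, mul_nonsing_inv B hBdet,
    conjTranspose_one, one_mul]

end RCLike

section Inequality

variable {𝕜 : Type*} [RCLike 𝕜]

theorem le_re_mixedDiscriminant_of_conjTranspose_mul_mul {ι : Type*} [Fintype ι] [DecidableEq ι]
    [Nonempty ι] {Q : ι → Matrix ι ι 𝕜} (hQ : ∀ i, (Q i).PosSemidef) {S : Matrix ι ι 𝕜}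
    (hS : S.det ≠ 0)
    (h : ((Fintype.card ι)! : ℝ) * ∏ i, RCLike.re (Sᴴ * Q i * S).det ^ (1 / Fintype.card ι : ℝ) ≤
      RCLike.re (mixedDiscriminant fun i => Sᴴ * Q i * S)) :
    ((Fintype.card ι)! : ℝ) * ∏ i, RCLike.re (Q i).det ^ (1 / Fintype.card ι : ℝ) ≤
      RCLike.re (mixedDiscriminant Q) := by
  set c := ‖S.det‖ ^ 2
  have hc : 0 < c := by positivity
  have hstar : star S.det * S.det = (c : 𝕜) := by
    rw [RCLike.star_def, RCLike.conj_mul, RCLike.ofReal_pow]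
  have hdet : ∀ i, RCLike.re (Sᴴ * Q i * S).det = c * RCLike.re (Q i).det := fun i => by
    rw [det_mul, det_mul, det_conjTranspose, mul_right_comm, hstar, RCLike.re_ofReal_mul]
  rw [mixedDiscriminant_conjTranspose_mul_mul, hstar, RCLike.re_ofReal_mul] at h
  simp only [hdet] at h
  rw [Real.prod_mul_rpow_one_div_card hc.le fun i => (hQ i).re_det_nonneg, mul_left_comm] at h
  exact le_of_mul_le_mul_left h hc

theorem le_re_mixedDiscriminant_of_eq_one {n : ℕ}
    {Q : Fin (n + 1) → Matrix (Fin (n + 1)) (Fin (n + 1)) 𝕜} (hQ : ∀ i, (Q i).PosSemidef)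
    (hQ0 : Q 0 = 1)
    (ih : ∀ R : Fin n → Matrix (Fin n) (Fin n) 𝕜, (∀ j, (R j).PosSemidef) →
      (n ! : ℝ) * ∏ j, RCLike.re (R j).det ^ (1 / n : ℝ) ≤ RCLike.re (mixedDiscriminant R)) :
    ((n + 1)! : ℝ) * ∏ i, RCLike.re (Q i).det ^ (1 / (n + 1 : ℕ) : ℝ) ≤
      RCLike.re (mixedDiscriminant Q) := by
  set R : Fin (n + 1) → Fin n → Matrix (Fin n) (Fin n) 𝕜 := fun p j =>
    (Q j.succ).submatrix (Equiv.swap 0 p ∘ Fin.succ) (Equiv.swap 0 p ∘ Fin.succ)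
  have hR : ∀ p j, (R p j).PosSemidef := fun p j => (hQ j.succ).submatrix _
  set y : Fin (n + 1) → ℝ := fun p => ∏ j, RCLike.re (R p j).det ^ (1 / n : ℝ)
  have hy : ∀ p, 0 ≤ y p := fun p => prod_nonneg fun j _ => by
    have := (hR p j).re_det_nonneg; positivity
  have hminor : ∀ j, RCLike.re (Q j.succ).det ≤ ∏ p, RCLike.re (R p j).det ^ (1 / n : ℝ) := by
    intro j
    have hn : n ≠ 0 := j.pos.ne'
    have hpow := (hQ j.succ).re_det_pow_le_prod_re_adjugate
    simp only [← det_submatrix_swap_comp_succ] at hpow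
    rw [Real.finsetProd_rpow _ _ fun p _ => (hR p j).re_det_nonneg,
      ← Real.pow_rpow_inv_natCast (hQ j.succ).re_det_nonneg hn, one_div]
    exact Real.rpow_le_rpow (pow_nonneg (hQ j.succ).re_det_nonneg n) hpow (by positivity)
  have hprod : ∏ j : Fin n, RCLike.re (Q j.succ).det ≤ ∏ p, y p := by
    rw [prod_comm]
    exact prod_le_prod (fun j _ => (hQ j.succ).re_det_nonneg) fun j _ => hminor j
  have hamgm := Real.card_mul_prod_rpow_le_sum hy
  simp only [Fintype.card_fin] at hamgm
  calc ((n + 1)! : ℝ) * ∏ i, RCLike.re (Q i).det ^ (1 / (n + 1 : ℕ) : ℝ)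
      = (n + 1)! * (∏ j : Fin n, RCLike.re (Q j.succ).det) ^ (1 / (n + 1 : ℕ) : ℝ) := by
        rw [Fin.prod_univ_succ, hQ0, det_one, RCLike.one_re, Real.one_rpow, one_mul,
          Real.finsetProd_rpow _ _ fun j _ => (hQ j.succ).re_det_nonneg]
    _ ≤ (n + 1)! * (∏ p, y p) ^ (1 / (n + 1 : ℕ) : ℝ) := by
        gcongr
        exact prod_nonneg fun j _ => (hQ j.succ).re_det_nonneg
    _ = n ! * ((n + 1 : ℕ) * ∏ p, y p ^ (1 / (n + 1 : ℕ) : ℝ)) := by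
        rw [← Real.finsetProd_rpow _ _ fun p _ => hy p, Nat.factorial_succ]
        push_cast; ring
    _ ≤ n ! * ∑ p, y p := by gcongr
    _ ≤ ∑ p, RCLike.re (mixedDiscriminant (R p)) := by
        rw [mul_sum]
        exact sum_le_sum fun p _ => ih (R p) (hR p)
    _ = RCLike.re (mixedDiscriminant Q) := by
        rw [mixedDiscriminant_fin_succ_of_eq_one Q hQ0, map_sum]

theorem factorial_mul_prod_re_det_rpow_le_re_mixedDiscriminant (n : ℕ)
    (Q : Fin n → Matrix (Fin n) (Fin n) 𝕜) (hQ : ∀ i, (Q i).PosSemidef) :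
    (n ! : ℝ) * ∏ i, RCLike.re (Q i).det ^ (1 / n : ℝ) ≤ RCLike.re (mixedDiscriminant Q) := by
  induction n with
  | zero => simp [mixedDiscriminant]
  | succ n ih =>
    by_cases h0 : (Q 0).det = 0
    · rw [prod_eq_zero (mem_univ 0) (by rw [h0, map_zero, Real.zero_rpow (by positivity)]),
        mul_zero]
      exact (RCLike.nonneg_iff.mp (mixedDiscriminant_nonneg hQ)).1
    obtain ⟨S, hS, hS0⟩ :=
      ((hQ 0).posDef_iff_det_ne_zero.mpr h0).exists_conjTranspose_mul_mul_eq_one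
    have h := le_re_mixedDiscriminant_of_conjTranspose_mul_mul hQ hS (by
      simpa only [Fintype.card_fin] using le_re_mixedDiscriminant_of_eq_one
        (fun i => (hQ i).conjTranspose_mul_mul_same S) hS0 (ih ·))
    simpa only [Fintype.card_fin] using h

end Inequality

end Matrix

theorem mixed_determinant_inequality_general (n : ℕ)
    (Q : Fin n → Matrix (Fin n) (Fin n) ℂ) (hQ : ∀ i, (Q i).PosSemidef) :
    (1 / (n.factorial : ℝ)) *
        (∑ σ : Equiv.Perm (Fin n), (Matrix.of fun j k => Q (σ k) j k).det).re ≥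
      ∏ i : Fin n, ((Q i).det.re) ^ ((1 : ℝ) / n) := by
  rw [ge_iff_le, one_div_mul_eq_div, le_div_iff₀' (by positivity)]
  exact factorial_mul_prod_re_det_rpow_le_re_mixedDiscriminant n Q hQ

/-- Mixed determinant inequality (the pointwise content of the paper's
Corollary): for Hermitian positive semidefinite matrices `Q₁, …, Qₙ`,
`(1/n!)·Re(Σ_σ det M_σ) ≥ Π_i (Re det Q_i)^{1/n}`, where the `k`-th column of
`M_σ` is the `k`-th column of `Q_{σ(k)}`. -/
theorem mixed_determinant_inequality (n : ℕ) (hn : 1 ≤ n)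
    (Q : Fin n → Matrix (Fin n) (Fin n) ℂ) (hQ : ∀ i, (Q i).PosSemidef) :
    (1 / (n.factorial : ℝ)) *
        (∑ σ : Equiv.Perm (Fin n), (Matrix.of fun j k => Q (σ k) j k).det).re ≥
      ∏ i : Fin n, ((Q i).det.re) ^ ((1 : ℝ) / n) :=
  mixed_determinant_inequality_general n Q hQ
end

section
/- Let n ≥ 1, let Ω ⊆ ℂⁿ be open, let φ : ℂⁿ → ℝ be twice continuously differentiable such that the complex Hessian Q_φ(z) is positive semidefinite for all z ∈ Ω, and let f : Ω → ℝ satisfy f ≥ 0. Then the following are equivalent: (a) Re(det Q_φ(z)) ≥ f(z) for all z ∈ Ω; (b) for every H ∈ ℋ and every z ∈ Ω, (1/n)·Re(tr(H·Q_φ(z))) ≥ f(z)^{1/n}. -/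
open Matrix ComplexOrder

/-- The complex Hessian `(∂²φ/∂z_j∂z̄_k)(z)` of a real-valued function `φ` on
`ℂⁿ`, expressed through the second real Fréchet derivative of `φ`. -/
noncomputable def complexHessian (n : ℕ) (φ : EuclideanSpace ℂ (Fin n) → ℝ)
    (z : EuclideanSpace ℂ (Fin n)) : Matrix (Fin n) (Fin n) ℂ :=
  Matrix.of fun j k =>
    (((iteratedFDeriv ℝ 2 φ z ![EuclideanSpace.single j 1, EuclideanSpace.single k 1]
        + iteratedFDeriv ℝ 2 φ z
            ![Complex.I • EuclideanSpace.single j 1,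
              Complex.I • EuclideanSpace.single k 1]) / 4 : ℝ) : ℂ)
    + Complex.I *
      (((iteratedFDeriv ℝ 2 φ z
            ![EuclideanSpace.single j 1, Complex.I • EuclideanSpace.single k 1]
        - iteratedFDeriv ℝ 2 φ z
            ![Complex.I • EuclideanSpace.single j 1,
              EuclideanSpace.single k 1]) / 4 : ℝ) : ℂ)

/-!
Pointwise the claim concerns a positive semidefinite matrix `A`. If `H` is positive definite
with `det H = 1`, AM–GM for the eigenvalues of `√H A √H` gives `(det A)^{1/n} ≤ tr(HA)/n`;
for invertible `A` equality holds at `H = (det A)^{1/n} A⁻¹`. A singular `A` is handled by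
applying this to `A + ε` and letting `ε → 0`.
-/

namespace Matrix

variable {ι : Type*} [Fintype ι] [DecidableEq ι]

lemma IsHermitian.det_re_eq_prod_eigenvalues {A : Matrix ι ι ℂ} (hA : A.IsHermitian) :
    A.det.re = ∏ i, hA.eigenvalues i := by
  rw [hA.det_eq_prod_eigenvalues]
  norm_cast

lemma IsHermitian.trace_re_eq_sum_eigenvalues {A : Matrix ι ι ℂ} (hA : A.IsHermitian) :
    A.trace.re = ∑ i, hA.eigenvalues i := by
  rw [hA.trace_eq_sum_eigenvalues]
  norm_cast

lemma PosSemidef.det_re_rpow_le_trace_re [Nonempty ι] {A : Matrix ι ι ℂ} (hA : A.PosSemidef) :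
    A.det.re ^ (1 / (Fintype.card ι : ℝ)) ≤ 1 / (Fintype.card ι : ℝ) * A.trace.re := by
  have hev : ∀ i ∈ Finset.univ, 0 ≤ hA.1.eigenvalues i := fun i _ => hA.eigenvalues_nonneg i
  rw [hA.1.det_re_eq_prod_eigenvalues, hA.1.trace_re_eq_sum_eigenvalues, Finset.mul_sum,
    ← Real.finsetProd_rpow _ _ hev]
  refine Real.geom_mean_le_arith_mean_weighted _ _ _ (fun _ _ => by positivity) ?_ hev
  simp [Finset.card_univ]

open scoped MatrixOrder in
lemma PosSemidef.det_mul_det_re_rpow_le_trace_mul_re [Nonempty ι] {A H : Matrix ι ι ℂ}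
    (hA : A.PosSemidef) (hH : H.PosSemidef) :
    (H.det * A.det).re ^ (1 / (Fintype.card ι : ℝ)) ≤
      1 / (Fintype.card ι : ℝ) * (H * A).trace.re := by
  set S := CFC.sqrt H
  have hSS : S * S = H := CFC.sqrt_mul_sqrt_self H hH.nonneg
  have hS : Sᴴ = S := (CFC.sqrt_nonneg H).posSemidef.1
  have hB : (S * A * S).PosSemidef := by simpa only [hS] using hA.mul_mul_conjTranspose_same S
  have hdet : (S * A * S).det = H.det * A.det := by
    rw [← hSS, det_mul, det_mul, det_mul]; ring
  have htrace : (S * A * S).trace = (H * A).trace := by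
    rw [trace_mul_comm, ← Matrix.mul_assoc, hSS]
  simpa only [hdet, htrace] using hB.det_re_rpow_le_trace_re

lemma PosDef.exists_det_eq_one_trace_mul_re_eq [Nonempty ι] {A : Matrix ι ι ℂ}
    (hA : A.PosDef) :
    ∃ H : Matrix ι ι ℂ, H.PosDef ∧ H.det = 1 ∧
      1 / (Fintype.card ι : ℝ) * (H * A).trace.re =
        A.det.re ^ (1 / (Fintype.card ι : ℝ)) := by
  set N := Fintype.card ι
  obtain ⟨hd, hd_im⟩ := Complex.pos_iff.mp hA.det_pos
  have hdet : A.det = (A.det.re : ℂ) := Complex.ext rfl (by simp [← hd_im])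
  set s := A.det.re ^ (1 / (N : ℝ)) with hs_def
  have hs : 0 < s := by positivity
  have hsN : (s : ℂ) ^ N = A.det := by
    rw [hdet, ← Complex.ofReal_pow, hs_def, one_div,
      Real.rpow_inv_natCast_pow hd.le Fintype.card_ne_zero]
  refine ⟨(s : ℂ) • A⁻¹, hA.inv.smul (Complex.zero_lt_real.mpr hs), ?_, ?_⟩
  · rw [det_smul, det_nonsing_inv, hsN, Ring.inverse_eq_inv']
    exact mul_inv_cancel₀ hA.det_pos.ne'
  · rw [smul_mul, nonsing_inv_mul _ ((isUnit_iff_isUnit_det A).mp hA.isUnit), trace_smul,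
      trace_one]
    simp only [N, smul_eq_mul, Complex.re_ofReal_mul, Complex.natCast_re]
    field_simp

lemma PosSemidef.le_det_re_of_forall_posDef_det_eq_one [Nonempty ι] {A : Matrix ι ι ℂ}
    (hA : A.PosSemidef) {c : ℝ} (hc : 0 ≤ c)
    (h : ∀ H : Matrix ι ι ℂ, H.PosDef → H.det = 1 →
      c ^ (1 / (Fintype.card ι : ℝ)) ≤ 1 / (Fintype.card ι : ℝ) * (H * A).trace.re) :
    c ≤ A.det.re := by
  have hperturbed : ∀ ε : ℝ, 0 < ε → c ≤ (A + (ε : ℂ) • 1).det.re := by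
    intro ε hε
    have hAε : (A + (ε : ℂ) • 1).PosDef :=
      PosDef.posSemidef_add hA (PosDef.one.smul (Complex.zero_lt_real.mpr hε))
    obtain ⟨H, hH, hH_det, hH_trace⟩ := hAε.exists_det_eq_one_trace_mul_re_eq
    have hmono : (H * A).trace.re ≤ (H * (A + (ε : ℂ) • 1)).trace.re := by
      have hH_trace_nonneg := (Complex.nonneg_iff.mp hH.posSemidef.trace_nonneg).1
      rw [Matrix.mul_add, trace_add, Complex.add_re, mul_smul_comm, mul_one, trace_smul,
        smul_eq_mul, Complex.re_ofReal_mul]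
      exact le_add_of_nonneg_right (mul_nonneg hε.le hH_trace_nonneg)
    have hdet_nonneg := (Complex.nonneg_iff.mp hAε.posSemidef.det_nonneg).1
    rw [← Real.rpow_le_rpow_iff (z := 1 / (Fintype.card ι : ℝ)) hc hdet_nonneg (by positivity),
      ← hH_trace]
    calc _ ≤ _ := h H hH hH_det
      _ ≤ _ := by gcongr
  have hcont : Continuous fun ε : ℝ => (A + (ε : ℂ) • 1).det.re := by fun_prop
  have hlim : Filter.Tendsto (fun ε : ℝ => (A + (ε : ℂ) • 1).det.re)
      (nhdsWithin 0 (Set.Ioi 0)) (nhds A.det.re) := by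
    simpa using (hcont.tendsto 0).mono_left nhdsWithin_le_nhds
  exact ge_of_tendsto hlim (eventually_nhdsWithin_of_forall hperturbed)

theorem PosSemidef.le_det_re_iff_forall_posDef_det_eq_one [Nonempty ι] {A : Matrix ι ι ℂ}
    (hA : A.PosSemidef) {c : ℝ} (hc : 0 ≤ c) :
    c ≤ A.det.re ↔ ∀ H : Matrix ι ι ℂ, H.PosDef → H.det = 1 →
      c ^ (1 / (Fintype.card ι : ℝ)) ≤ 1 / (Fintype.card ι : ℝ) * (H * A).trace.re := by
  refine ⟨fun h H hH hH_det => ?_, hA.le_det_re_of_forall_posDef_det_eq_one hc⟩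
  calc c ^ (1 / (Fintype.card ι : ℝ)) ≤ A.det.re ^ (1 / (Fintype.card ι : ℝ)) := by gcongr
    _ ≤ _ := by simpa [hH_det] using hA.det_mul_det_re_rpow_le_trace_mul_re hH.posSemidef

end Matrix

theorem det_hessian_ge_iff_forall_laplacian_ge_general (n : ℕ) (hn : 1 ≤ n)
    (Ω : Set (EuclideanSpace ℂ (Fin n)))
    (φ : EuclideanSpace ℂ (Fin n) → ℝ)
    (hpsh : ∀ z ∈ Ω, (complexHessian n φ z).PosSemidef)
    (f : EuclideanSpace ℂ (Fin n) → ℝ) (hf : ∀ z ∈ Ω, 0 ≤ f z) :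
    (∀ z ∈ Ω, (complexHessian n φ z).det.re ≥ f z) ↔
      (∀ H : Matrix (Fin n) (Fin n) ℂ, H.PosDef → H.det = 1 → ∀ z ∈ Ω,
        (1 / (n : ℝ)) * ((H * complexHessian n φ z).trace).re
          ≥ (f z) ^ ((1 : ℝ) / n)) := by
  have : NeZero n := ⟨by omega⟩
  have key := fun z hz => (hpsh z hz).le_det_re_iff_forall_posDef_det_eq_one (hf z hz)
  simp only [Fintype.card_fin] at key
  exact ⟨fun h H hH hH_det z hz => (key z hz).mp (h z hz) H hH hH_det,
    fun h z hz => (key z hz).mpr fun H hH hH_det => h H hH hH_det z hz⟩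

/-- The smooth case of (i) ⇔ (iii) in the Main Theorem: for a `C²`
plurisubharmonic `φ` on an open set `Ω ⊆ ℂⁿ` and `f ≥ 0`, one has
`det Q_φ ≥ f` on `Ω` iff `Δ_H φ ≥ f^{1/n}` on `Ω` for all `H ∈ ℋ`. -/
theorem det_hessian_ge_iff_forall_laplacian_ge (n : ℕ) (hn : 1 ≤ n)
    (Ω : Set (EuclideanSpace ℂ (Fin n))) (hΩ : IsOpen Ω)
    (φ : EuclideanSpace ℂ (Fin n) → ℝ) (hφ : ContDiff ℝ 2 φ)
    (hpsh : ∀ z ∈ Ω, (complexHessian n φ z).PosSemidef)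
    (f : EuclideanSpace ℂ (Fin n) → ℝ) (hf : ∀ z ∈ Ω, 0 ≤ f z) :
    (∀ z ∈ Ω, (complexHessian n φ z).det.re ≥ f z) ↔
      (∀ H : Matrix (Fin n) (Fin n) ℂ, H.PosDef → H.det = 1 → ∀ z ∈ Ω,
        (1 / (n : ℝ)) * ((H * complexHessian n φ z).trace).re
          ≥ (f z) ^ ((1 : ℝ) / n)) :=
  det_hessian_ge_iff_forall_laplacian_ge_general n hn Ω φ hpsh f hf
end
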